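/- arXiv:2309.13815 — 9 statements merged into one kernel-verified Lean document; each statement's English description precedes it below -/
import Mathlib

section
/- For a simple closed k-curve SC_k^{n,4} with exactly 4 elements, the map p : ℤ → SC_k^{n,4}, p(t) = s_{t mod 4}, is a local (2,k)-isomorphism but not a radius-2 local (2,k)-isomorphism. -/
/-- Digital k-neighborhood of radius 1: `x` together with all points adjacent to `x`. -/
def dnbhd {α : Type*} (A : α → α → Prop) (x : α) : Set α := {y | A x y} ∪ {x}

/-- Digital k-neighborhood of radius 2: points at adjacency-distance at most 2 from `x`. -/
def dnbhd2 {α : Type*} (A : α → α → Prop) (x : α) : Set α :=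
  {y | A x y ∨ ∃ z, A x z ∧ A z y} ∪ {x}

/-- Digital `(k₁,k₂)`-continuity: adjacent points map to equal or adjacent points. -/
def DigCont {α β : Type*} (A : α → α → Prop) (B : β → β → Prop) (f : α → β) : Prop :=
  ∀ x y, A x y → f x = f y ∨ B (f x) (f y)

/-- `f` restricted to `S` is a digital isomorphism onto `T`. -/
def IsoOn {α β : Type*} (A : α → α → Prop) (B : β → β → Prop) (f : α → β)
    (S : Set α) (T : Set β) : Prop :=
  Set.InjOn f S ∧ f '' S = T ∧
    ∀ a ∈ S, ∀ b ∈ S, a ≠ b → (A a b ↔ B (f a) (f b))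

/-- A `(k₁,k₂)`-isomorphism: a bijection, digitally continuous with digitally
continuous inverse. -/
def DigIso {α β : Type*} (A : α → α → Prop) (B : β → β → Prop) (f : α → β) : Prop :=
  ∃ g : β → α, Function.LeftInverse g f ∧ Function.RightInverse g f ∧
    DigCont A B f ∧ DigCont B A g

/-- A local `(k₁,k₂)`-isomorphism: each `N(x,1)` is mapped isomorphically onto `N(f x,1)`. -/
def LocalIso {α β : Type*} (A : α → α → Prop) (B : β → β → Prop) (f : α → β) : Prop :=
  ∀ x, IsoOn A B f (dnbhd A x) (dnbhd B (f x))

/-- A radius-2 local `(k₁,k₂)`-isomorphism. -/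
def R2LocalIso {α β : Type*} (A : α → α → Prop) (B : β → β → Prop) (f : α → β) : Prop :=
  ∀ x, IsoOn A B f (dnbhd2 A x) (dnbhd2 B (f x))

/-- `f` restricted to `S` is a digital isomorphism onto its image (weakly local condition). -/
def WLIsoOn {α β : Type*} (A : α → α → Prop) (B : β → β → Prop) (f : α → β)
    (S : Set α) : Prop :=
  Set.InjOn f S ∧ ∀ a ∈ S, ∀ b ∈ S, a ≠ b → (A a b ↔ B (f a) (f b))

/-- A weakly local (WL-) `(k₁,k₂)`-isomorphism. -/
def WLIso {α β : Type*} (A : α → α → Prop) (B : β → β → Prop) (f : α → β) : Prop :=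
  ∀ x, WLIsoOn A B f (dnbhd A x)

/-- A `(k₁,k₂)`-covering map (radius-1 version, Definition 5). -/
def CoveringMap {α β : Type*} (A : α → α → Prop) (B : β → β → Prop) (p : α → β) : Prop :=
  Function.Surjective p ∧ ∀ b : β,
    (p ⁻¹' dnbhd B b = ⋃ e ∈ {e | p e = b}, dnbhd A e) ∧
    ({e | p e = b} : Set α).Pairwise (fun e e' => Disjoint (dnbhd A e) (dnbhd A e')) ∧
    ∀ e, p e = b → IsoOn A B p (dnbhd A e) (dnbhd B b)

/-- The first (2012) version of a pseudo-`(k₁,k₂)`-covering map (Definition 8). -/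
def PseudoCovering1 {α β : Type*} (A : α → α → Prop) (B : β → β → Prop) (p : α → β) : Prop :=
  Function.Surjective p ∧ ∀ b : β, ∃ M : Set α, M.Nonempty ∧ (∀ e ∈ M, p e = b) ∧
    (p ⁻¹' dnbhd B b = ⋃ e ∈ M, dnbhd A e) ∧
    M.Pairwise (fun e e' => Disjoint (dnbhd A e) (dnbhd A e')) ∧
    ∀ e ∈ M, p '' dnbhd A e ⊆ dnbhd B b ∧ WLIsoOn A B p (dnbhd A e)

/-- The revised pseudo-`(k₁,k₂)`-covering map (Definition 10). -/
def PseudoCoveringR {α β : Type*} (A : α → α → Prop) (B : β → β → Prop) (p : α → β) : Prop :=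
  Function.Surjective p ∧ ∀ b : β, ∃ M : Set α, M.Nonempty ∧ (∀ e ∈ M, p e = b) ∧
    ((⋃ e ∈ M, dnbhd A e) ⊆ p ⁻¹' dnbhd B b) ∧
    M.Pairwise (fun e e' => Disjoint (dnbhd A e) (dnbhd A e')) ∧
    ∀ e ∈ M, p '' dnbhd A e ⊆ dnbhd B b ∧ WLIsoOn A B p (dnbhd A e)

/-- `k`-connectedness of a subset. -/
def DigConn {α : Type*} (A : α → α → Prop) (S : Set α) : Prop :=
  ∀ x ∈ S, ∀ y ∈ S, x ≠ y → ∃ (l : ℕ) (c : ℕ → α),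
    (∀ i ≤ l, c i ∈ S) ∧ c 0 = x ∧ c l = y ∧ ∀ i < l, A (c i) (c (i + 1))

/-- A digital path on `[0,m]` (consecutive values equal or adjacent). -/
def DigPathF {α : Type*} (A : α → α → Prop) {m : ℕ} (f : Fin (m + 1) → α) : Prop :=
  ∀ i : Fin m, f i.castSucc = f i.succ ∨ A (f i.castSucc) (f i.succ)

/-- 2-adjacency on ℤ. -/
def adjZ : ℤ → ℤ → Prop := fun x y => |x - y| = 1

/-- 2-adjacency on ℤ⁺ = ℕ. -/
def adjN : ℕ → ℕ → Prop := fun x y => y = x + 1 ∨ x = y + 1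

/-- for a simple closed k-curve with exactly 4 elements, `p(t) = s_{t mod 4}`
is a local `(2,k)`-isomorphism but not a radius-2 local `(2,k)`-isomorphism. -/
theorem stmt8 {Y : Type*} (Ak : Y → Y → Prop)
    (s : ZMod 4 → Y) (hs : Function.Bijective s)
    (hadj : ∀ i j : ZMod 4, Ak (s i) (s j) ↔ i ≠ j ∧ (j = i + 1 ∨ i = j + 1)) :
    LocalIso adjZ Ak (fun t : ℤ => s (t : ZMod 4)) ∧
    ¬ R2LocalIso adjZ Ak (fun t : ℤ => s (t : ZMod 4)) := by
  have habs : ∀ x y : ℤ, adjZ x y ↔ x - y = 1 ∨ x - y = -1 := by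
    intro x y; exact abs_eq (by norm_num)
  have hmem : ∀ x y : ℤ, y ∈ dnbhd adjZ x ↔ y = x - 1 ∨ y = x ∨ y = x + 1 := by
    intro x y
    simp only [dnbhd, Set.mem_union, Set.mem_setOf_eq, Set.mem_singleton_iff, habs]
    omega
  have key : ∀ i j : ZMod 4, (i ≠ j ∧ (j = i + 1 ∨ i = j + 1)) ↔ (j = i - 1 ∨ j = i + 1) := by
    decide
  have hAk : ∀ i j : ZMod 4, Ak (s i) (s j) ↔ (j = i - 1 ∨ j = i + 1) := by
    intro i j; rw [hadj, key]
  have hmemY : ∀ (i : ZMod 4) (y : Y),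
      y ∈ dnbhd Ak (s i) ↔ y = s (i - 1) ∨ y = s i ∨ y = s (i + 1) := by
    intro i y
    obtain ⟨j, rfl⟩ := hs.2 y
    simp only [dnbhd, Set.mem_union, Set.mem_setOf_eq, Set.mem_singleton_iff, hAk,
      hs.1.eq_iff]
    tauto
  have main : ∀ a b : ℤ, a - b ≤ 2 → b - a ≤ 2 →
      ((a - b = 1 ∨ a - b = -1) ↔
        ((b : ZMod 4) = (a : ZMod 4) - 1 ∨ (b : ZMod 4) = (a : ZMod 4) + 1)) := by
    intro a b h1 h2
    have c1 : ((a : ZMod 4) - 1 : ZMod 4) = ((a - 1 : ℤ) : ZMod 4) := by push_cast; ring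
    have c2 : ((a : ZMod 4) + 1 : ZMod 4) = ((a + 1 : ℤ) : ZMod 4) := by push_cast; ring
    rw [c1, c2, ZMod.intCast_eq_intCast_iff', ZMod.intCast_eq_intCast_iff']
    omega
  constructor
  · intro x
    refine ⟨?_, ?_, ?_⟩
    · intro a ha b hb hab
      have hc : ((a : ZMod 4)) = (b : ZMod 4) := hs.1 hab
      rw [ZMod.intCast_eq_intCast_iff'] at hc
      rw [hmem] at ha hb
      rcases ha with rfl | rfl | rfl <;> rcases hb with h | h | h <;> omega
    · ext y
      simp only [Set.mem_image, hmemY]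
      constructor
      · rintro ⟨a, ha, rfl⟩
        rw [hmem] at ha
        rcases ha with rfl | rfl | rfl
        · left; push_cast; ring_nf
        · right; left; rfl
        · right; right; push_cast; ring_nf
      · rintro (rfl | rfl | rfl)
        · exact ⟨x - 1, (hmem x _).2 (Or.inl rfl), by push_cast; ring_nf⟩
        · exact ⟨x, (hmem x _).2 (Or.inr (Or.inl rfl)), rfl⟩
        · exact ⟨x + 1, (hmem x _).2 (Or.inr (Or.inr rfl)), by push_cast; ring_nf⟩
    · intro a ha b hb hne
      rw [hmem] at ha hb
      simp only [habs, hAk]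
      exact main a b (by omega) (by omega)
  · intro h
    obtain ⟨hinj, -, -⟩ := h 0
    have h2 : (-2 : ℤ) ∈ dnbhd2 adjZ 0 := by
      simp only [dnbhd2, Set.mem_union, Set.mem_setOf_eq, Set.mem_singleton_iff, habs]
      exact Or.inl (Or.inr ⟨-1, by omega, by omega⟩)
    have h2' : (2 : ℤ) ∈ dnbhd2 adjZ 0 := by
      simp only [dnbhd2, Set.mem_union, Set.mem_setOf_eq, Set.mem_singleton_iff, habs]
      exact Or.inl (Or.inr ⟨1, by omega, by omega⟩)
    have hcast : ((-2 : ℤ) : ZMod 4) = ((2 : ℤ) : ZMod 4) := by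
      rw [ZMod.intCast_eq_intCast_iff']
      norm_num
    have heq : s ((-2 : ℤ) : ZMod 4) = s ((2 : ℤ) : ZMod 4) := by rw [hcast]
    have := hinj h2 h2' heq
    omega
end

section
/- A surjection p : (E,k₁) → (B,k₂) is a (k₁,k₂)-covering map if and only if p is a surjective local (k₁,k₂)-isomorphism. -/
lemma mem_dnbhd_symm {α : Type*} {A : α → α → Prop} (hA : Symmetric A) {x e : α}
    (h : x ∈ dnbhd A e) : e ∈ dnbhd A x := by
  rcases h with h | h
  · exact Or.inl (hA h)
  · have hx : x = e := h
    subst hx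
    exact Or.inr rfl

/-- a surjection is a `(k₁,k₂)`-covering map iff it is a surjective local
`(k₁,k₂)`-isomorphism. -/
theorem stmt9 {E B' : Type*} (A : E → E → Prop) (Ab : B' → B' → Prop)
    (hA : Symmetric A) (hAb : Symmetric Ab) (p : E → B') :
    CoveringMap A Ab p ↔ (Function.Surjective p ∧ LocalIso A Ab p) := by
  constructor
  · rintro ⟨hs, h⟩
    exact ⟨hs, fun x => (h (p x)).2.2 x rfl⟩
  · rintro ⟨hs, hl⟩
    refine ⟨hs, fun b => ⟨?_, ?_, fun e he => he ▸ hl e⟩⟩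
    · ext x
      simp only [Set.mem_preimage, Set.mem_iUnion, Set.mem_setOf_eq, exists_prop]
      constructor
      · intro hx
        rcases hx with hadj | heq
        · have hb : b ∈ dnbhd Ab (p x) := Or.inl (hAb hadj)
          rw [← (hl x).2.1] at hb
          obtain ⟨e, he, hpe⟩ := hb
          exact ⟨e, hpe, mem_dnbhd_symm hA he⟩
        · exact ⟨x, heq, Or.inr rfl⟩
      · rintro ⟨e, hpe, hx⟩
        have : p x ∈ p '' dnbhd A e := ⟨x, hx, rfl⟩
        rw [(hl e).2.1, hpe] at this
        exact this
    · intro e he e' he' hne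
      rw [Set.disjoint_left]
      intro x hx hx'
      exact hne ((hl x).1 (mem_dnbhd_symm hA hx) (mem_dnbhd_symm hA hx')
        (he.trans he'.symm))
end

section
/- Every (k₁,k₂)-covering map satisfies the unique path lifting property: if p : (E,e₀) → (B,b₀) is a pointed (k₁,k₂)-covering map, then every k₂-path f : [0,m]_ℤ → B with f(0) = b₀ has a unique lifting to a k₁-path f̃ : [0,m]_ℤ → E with f̃(0) = e₀ and p ∘ f̃ = f. -/
/-!
A covering map restricts to a bijection from `N(e,1)` onto `N(p e,1)` for every `e`. A path is
lifted one step at a time: surjectivity on `N(g i,1)` provides the next point of the lift, and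
injectivity on `N(g i,1)` shows, by induction along the path, that any two lifts with the same
starting point agree.
-/

section PathLifting

variable {α β : Type*} {A : α → α → Prop} {B : β → β → Prop} {p : α → β}

theorem mem_dnbhd {x y : α} : y ∈ dnbhd A x ↔ A x y ∨ y = x := Iff.rfl

theorem digPathF_iff_mem_dnbhd {m : ℕ} {g : Fin (m + 1) → α} :
    DigPathF A g ↔ ∀ i : Fin m, g i.succ ∈ dnbhd A (g i.castSucc) := by
  refine forall_congr' fun i => ?_
  rw [mem_dnbhd, or_comm, eq_comm]

theorem DigPathF.init {m : ℕ} {g : Fin (m + 2) → α} (hg : DigPathF A g) :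
    DigPathF A (Fin.init g) := by
  intro i
  simpa only [Fin.init, Fin.succ_castSucc] using hg i.castSucc

theorem DigPathF.snoc {m : ℕ} {g : Fin (m + 1) → α} (hg : DigPathF A g) {e : α}
    (he : e ∈ dnbhd A (g (Fin.last m))) : DigPathF A (Fin.snoc g e : Fin (m + 2) → α) := by
  rw [digPathF_iff_mem_dnbhd] at hg ⊢
  intro i
  induction i using Fin.lastCases with
  | last => simpa only [Fin.succ_last, Fin.snoc_last, Fin.snoc_castSucc] using he
  | cast j => simpa only [Fin.succ_castSucc, Fin.snoc_castSucc] using hg j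

theorem CoveringMap.localIso (hp : CoveringMap A B p) : LocalIso A B p :=
  fun e => (hp.2 (p e)).2.2 e rfl

theorem exists_digPathF_lift (hp : ∀ e, Set.SurjOn p (dnbhd A e) (dnbhd B (p e)))
    {m : ℕ} {f : Fin (m + 1) → β} (hf : DigPathF B f) {e₀ : α} (he₀ : p e₀ = f 0) :
    ∃ g : Fin (m + 1) → α, DigPathF A g ∧ g 0 = e₀ ∧ p ∘ g = f := by
  induction m with
  | zero =>
    refine ⟨fun _ => e₀, finZeroElim, rfl, funext fun i => ?_⟩
    rw [Fin.fin_one_eq_zero i]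
    exact he₀
  | succ m ih =>
    obtain ⟨g, hg, hg0, hpg⟩ := ih hf.init he₀
    have hstep : f (Fin.last (m + 1)) ∈ dnbhd B (p (g (Fin.last m))) := by
      rw [← Function.comp_apply (f := p), hpg]
      exact digPathF_iff_mem_dnbhd.mp hf (Fin.last m)
    obtain ⟨e, he, hpe⟩ := hp _ hstep
    refine ⟨Fin.snoc g e, hg.snoc he, ?_, ?_⟩
    · simpa only [← Fin.castSucc_zero, Fin.snoc_castSucc] using hg0
    · rw [Fin.comp_snoc, hpg, hpe, Fin.snoc_init_self]

theorem digPathF_lift_unique (hp : ∀ e, Set.InjOn p (dnbhd A e))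
    {m : ℕ} {g g' : Fin (m + 1) → α} (hg : DigPathF A g) (hg' : DigPathF A g')
    (h0 : g 0 = g' 0) (hpg : p ∘ g = p ∘ g') : g = g' := by
  funext i
  induction i using Fin.induction with
  | zero => exact h0
  | succ i ih =>
    have hmem' := digPathF_iff_mem_dnbhd.mp hg' i
    rw [← ih] at hmem'
    exact hp _ (digPathF_iff_mem_dnbhd.mp hg i) hmem' (congrFun hpg i.succ)

end PathLifting

theorem stmt10_general {E B' : Type*} (A : E → E → Prop) (Ab : B' → B' → Prop)
    (p : E → B') (e₀ : E) (b₀ : B') (hp : CoveringMap A Ab p) (hpe : p e₀ = b₀)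
    (m : ℕ) (f : Fin (m + 1) → B') (hf : DigPathF Ab f) (hf0 : f 0 = b₀) :
    ∃! g : Fin (m + 1) → E, DigPathF A g ∧ g 0 = e₀ ∧ p ∘ g = f := by
  have hloc := hp.localIso
  refine existsUnique_of_exists_of_unique
    (exists_digPathF_lift (fun e => (hloc e).2.1.symm.subset) hf (hpe.trans hf0.symm)) ?_
  rintro g g' ⟨hg, hg0, hpg⟩ ⟨hg', hg'0, hpg'⟩
  exact digPathF_lift_unique (fun e => (hloc e).1) hg hg' (hg0.trans hg'0.symm)
    (hpg.trans hpg'.symm)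

/-- unique path lifting for `(k₁,k₂)`-covering maps. -/
theorem stmt10 {E B' : Type*} (A : E → E → Prop) (Ab : B' → B' → Prop)
    (hA : Symmetric A) (hAb : Symmetric Ab)
    (p : E → B') (e₀ : E) (b₀ : B') (hp : CoveringMap A Ab p) (hpe : p e₀ = b₀)
    (m : ℕ) (f : Fin (m + 1) → B') (hf : DigPathF Ab f) (hf0 : f 0 = b₀) :
    ∃! g : Fin (m + 1) → E, DigPathF A g ∧ g 0 = e₀ ∧ p ∘ g = f :=
  stmt10_general A Ab p e₀ b₀ hp hpe m f hf hf0
end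

section
/- Every pseudo-(k₁,k₂)-covering map in the sense of the first (2012) definition is a (k₁,k₂)-covering map. -/
/-- every pseudo-`(k₁,k₂)`-covering map in the first (2012) sense is a
`(k₁,k₂)`-covering map. -/
theorem stmt11 {E B' : Type*} (A : E → E → Prop) (Ab : B' → B' → Prop)
    (hA : Symmetric A) (hAb : Symmetric Ab) (p : E → B')
    (hp : PseudoCovering1 A Ab p) : CoveringMap A Ab p := by
  obtain ⟨hsurj, hloc⟩ := hp
  -- For each b, the witness set M equals the fiber of b.
  have key : ∀ b : B', ∃ M : Set E, M = {e | p e = b} ∧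
      (p ⁻¹' dnbhd Ab b = ⋃ e ∈ M, dnbhd A e) ∧
      M.Pairwise (fun e e' => Disjoint (dnbhd A e) (dnbhd A e')) ∧
      ∀ e ∈ M, p '' dnbhd A e ⊆ dnbhd Ab b ∧ WLIsoOn A Ab p (dnbhd A e) := by
    intro b
    obtain ⟨M, hMne, hMfib, hMcov, hMdisj, hMiso⟩ := hloc b
    refine ⟨M, ?_, hMcov, hMdisj, hMiso⟩
    apply Set.Subset.antisymm (fun e he => hMfib e he)
    intro e he
    have hb : e ∈ p ⁻¹' dnbhd Ab b := by
      simp only [Set.mem_preimage, dnbhd, Set.mem_union, Set.mem_setOf_eq,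
        Set.mem_singleton_iff]
      exact Or.inr he
    rw [hMcov] at hb
    simp only [Set.mem_iUnion] at hb
    obtain ⟨e', he'M, hee'⟩ := hb
    have he'self : e' ∈ dnbhd A e' := Or.inr rfl
    have := (hMiso e' he'M).2.1 hee' he'self (by
      rw [he, hMfib e' he'M])
    rwa [this]
  refine ⟨hsurj, fun b => ?_⟩
  obtain ⟨M, hMeq, hMcov, hMdisj, hMiso⟩ := key b
  subst hMeq
  refine ⟨hMcov, hMdisj, fun e he => ?_⟩
  obtain ⟨himg, hinj, hadj⟩ := hMiso e he
  refine ⟨hinj, ?_, hadj⟩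
  apply Set.Subset.antisymm himg
  intro y hy
  rcases hy with hy | hy
  · -- y adjacent to b
    by_cases hyb : y = b
    · exact ⟨e, Or.inr rfl, by rw [he, hyb]⟩
    · obtain ⟨M', hM'eq, hM'cov, _, hM'iso⟩ := key y
      have heb : e ∈ p ⁻¹' dnbhd Ab y := by
        exact Or.inl (by show Ab y (p e); rw [he]; exact hAb hy)
      rw [hM'cov] at heb
      simp only [Set.mem_iUnion] at heb
      obtain ⟨x, hxM', hex⟩ := heb
      have hpx : p x = y := by rw [hM'eq] at hxM'; exact hxM'
      rcases hex with hex | hex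
      · exact ⟨x, Or.inl (hA hex), hpx⟩
      · exfalso; rw [Set.mem_singleton_iff] at hex
        exact hyb (by rw [← hpx, ← hex, he])
  · -- y = b
    rw [Set.mem_singleton_iff] at hy
    exact ⟨e, Or.inr rfl, by rw [he, hy]⟩
end

section
/- Every (k₁,k₂)-covering map (Definition 5) is a pseudo-(k₁,k₂)-covering map in the revised sense (Definition 10), but the converse fails: the map p : ℤ⁺ → SC_k^{n,l}, p(t) = s_{t mod l}, where ℤ⁺ = [0,∞)_ℤ with 2-adjacency, is a pseudo-(2,k)-covering map that is not a (2,k)-covering map. -/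
/-- every covering map is a revised pseudo-covering map, but the converse
fails: `p : ℤ⁺ → SC_k^{n,l}`, `p(t) = s_{t mod l}`, is a pseudo-`(2,k)`-covering map
that is not a `(2,k)`-covering map. -/
theorem stmt12 (l : ℕ) (hl : 4 ≤ l) {Y : Type*} (Ak : Y → Y → Prop)
    (s : ZMod l → Y) (hs : Function.Bijective s)
    (hadj : ∀ i j : ZMod l, Ak (s i) (s j) ↔ i ≠ j ∧ (j = i + 1 ∨ i = j + 1)) :
    (∀ (E B' : Type) (A : E → E → Prop) (Ab : B' → B' → Prop) (q : E → B'),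
      CoveringMap A Ab q → PseudoCoveringR A Ab q) ∧
    PseudoCoveringR adjN Ak (fun t : ℕ => s (t : ZMod l)) ∧
    ¬ CoveringMap adjN Ak (fun t : ℕ => s (t : ZMod l)) := by
  haveI : NeZero l := ⟨by omega⟩
  have hsi := hs.1
  have cast_ne : ∀ m : ℕ, 0 < m → m < l → (m : ZMod l) ≠ 0 := by
    intro m hm1 hm2 h
    rw [ZMod.natCast_eq_zero_iff] at h
    have := Nat.le_of_dvd hm1 h
    omega
  have h1 : (1 : ZMod l) ≠ 0 := by
    have := cast_ne 1 (by norm_num) (by omega); simpa using this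
  have h2 : (2 : ZMod l) ≠ 0 := by
    have := cast_ne 2 (by norm_num) (by omega); simpa using this
  have h3 : (3 : ZMod l) ≠ 0 := by
    have := cast_ne 3 (by norm_num) (by omega); simpa using this
  refine ⟨?_, ?_, ?_⟩
  · -- Covering implies revised pseudo-covering
    rintro E B' A Ab q ⟨hsurj, hb⟩
    refine ⟨hsurj, fun b => ?_⟩
    obtain ⟨heq, hpair, hiso⟩ := hb b
    obtain ⟨e0, he0⟩ := hsurj b
    refine ⟨{e | q e = b}, ⟨e0, he0⟩, fun e he => he, ?_, hpair, fun e he => ?_⟩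
    · rw [heq]
    · obtain ⟨hinj, himg, hiff⟩ := hiso e he
      exact ⟨himg ▸ Set.Subset.rfl, hinj, hiff⟩
  · -- p is a revised pseudo-covering map
    constructor
    · intro y
      obtain ⟨i, hi⟩ := hs.2 y
      refine ⟨i.val, ?_⟩
      show s ((i.val : ℕ) : ZMod l) = y
      rw [ZMod.natCast_rightInverse i]; exact hi
    intro b
    obtain ⟨i, hi⟩ := hs.2 b
    set e₀ : ℕ := i.val + l with he₀
    have c1 : ((e₀ : ℕ) : ZMod l) = i := by
      push_cast [he₀]
      rw [ZMod.natCast_rightInverse i, ZMod.natCast_self, add_zero]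
    have c0 : ((e₀ - 1 : ℕ) : ZMod l) = i - 1 := by
      have hh : (e₀ - 1) + 1 = e₀ := by omega
      have := congrArg (Nat.cast : ℕ → ZMod l) hh
      push_cast at this
      rw [c1] at this
      linear_combination this
    have c2 : ((e₀ + 1 : ℕ) : ZMod l) = i + 1 := by push_cast [c1]; ring
    have hmem : ∀ y, y ∈ dnbhd adjN e₀ ↔ y = e₀ - 1 ∨ y = e₀ ∨ y = e₀ + 1 := by
      intro y
      simp only [dnbhd, adjN, Set.mem_union, Set.mem_setOf_eq, Set.mem_singleton_iff]
      omega
    have d01 : (i : ZMod l) - 1 ≠ i := fun h => h1 (by linear_combination -h)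
    have d12 : (i : ZMod l) ≠ i + 1 := fun h => h1 (by linear_combination -h)
    have d02 : (i : ZMod l) - 1 ≠ i + 1 := fun h => h2 (by linear_combination -h)
    have himg : ∀ y ∈ dnbhd adjN e₀, s ((y : ℕ) : ZMod l) ∈ dnbhd Ak b := by
      intro y hy
      rcases (hmem y).1 hy with h | h | h <;> subst h
      · exact Or.inl (by rw [c0, ← hi]; exact (hadj i (i - 1)).2 ⟨Ne.symm d01, Or.inr (by ring)⟩)
      · exact Or.inr (by rw [c1, hi]; rfl)
      · exact Or.inl (by rw [c2, ← hi]; exact (hadj i (i + 1)).2 ⟨d12, Or.inl rfl⟩)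
    refine ⟨{e₀}, Set.singleton_nonempty _, ?_, ?_, Set.pairwise_singleton _ _, ?_⟩
    · intro e he
      rw [Set.mem_singleton_iff] at he
      subst he
      show s _ = b
      rw [c1, hi]
    · intro y hy
      simp only [Set.mem_singleton_iff, Set.iUnion_iUnion_eq_left] at hy
      exact himg y hy
    · intro e he
      rw [Set.mem_singleton_iff] at he
      subst he
      refine ⟨?_, ?_, ?_⟩
      · rintro _ ⟨y, hy, rfl⟩
        exact himg y hy
      · -- InjOn
        intro a ha b' hb' hpq
        have hc : ((a : ℕ) : ZMod l) = ((b' : ℕ) : ZMod l) := hsi hpq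
        rcases (hmem a).1 ha with h | h | h <;> rcases (hmem b').1 hb' with h' | h' | h' <;>
          subst h <;> subst h' <;>
          simp only [c0, c1, c2] at hc <;>
          first
          | rfl
          | exact absurd hc d01
          | exact absurd hc.symm d01
          | exact absurd hc d12
          | exact absurd hc.symm d12
          | exact absurd hc d02
          | exact absurd hc.symm d02
      · -- adjacency iff
        intro a ha b' hb' hab
        rcases (hmem a).1 ha with h | h | h <;> rcases (hmem b').1 hb' with h' | h' | h' <;>
          subst h <;> subst h' <;> simp only [c0, c1, c2]
        · exact absurd rfl hab
        · exact iff_of_true (Or.inl (by omega)) ((hadj _ _).2 ⟨d01, Or.inl (by ring)⟩)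
        · refine iff_of_false (by simp only [adjN]; omega) ?_
          intro hA
          rcases ((hadj _ _).1 hA).2 with h' | h'
          · exact h1 (by linear_combination h')
          · exact h3 (by linear_combination -h')
        · exact iff_of_true (Or.inr (by omega)) ((hadj _ _).2 ⟨Ne.symm d01, Or.inr (by ring)⟩)
        · exact absurd rfl hab
        · exact iff_of_true (Or.inl (by omega)) ((hadj _ _).2 ⟨d12, Or.inl rfl⟩)
        · refine iff_of_false (by simp only [adjN]; omega) ?_
          intro hA
          rcases ((hadj _ _).1 hA).2 with h' | h'
          · exact h3 (by linear_combination -h')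
          · exact h1 (by linear_combination h')
        · exact iff_of_true (Or.inr (by omega)) ((hadj _ _).2 ⟨Ne.symm d12, Or.inr rfl⟩)
        · exact absurd rfl hab
  · -- not a covering map
    rintro ⟨hsurj, hcond⟩
    have h0 : (fun t : ℕ => s ((t : ℕ) : ZMod l)) 0 = s 0 := by norm_num
    obtain ⟨-, -, hiso⟩ := hcond (s 0)
    obtain ⟨hinj, himg, hiff⟩ := hiso 0 h0
    have hne : (0 : ZMod l) ≠ -1 := fun h => h1 (by linear_combination h)
    have hm : s (-1 : ZMod l) ∈ dnbhd Ak (s 0) :=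
      Or.inl ((hadj 0 (-1)).2 ⟨hne, Or.inr (by ring)⟩)
    rw [← himg] at hm
    obtain ⟨a, haS, ha⟩ := hm
    have ha01 : a = 0 ∨ a = 1 := by
      rcases haS with h | h
      · simp only [adjN, Set.mem_setOf_eq] at h; omega
      · rw [Set.mem_singleton_iff] at h; omega
    have hc : ((a : ℕ) : ZMod l) = -1 := hsi ha
    rcases ha01 with h | h <;> subst h <;> push_cast at hc
    · exact h1 (by linear_combination hc)
    · exact h2 (by linear_combination hc)
end

section
/- Given two simple closed curves SC_{k₁}^{n₁,l₁} and SC_{k₂}^{n₂,l₂}, there is a DT-(k₁,k₂)-embedding of SC_{k₁}^{n₁,l₁} into SC_{k₂}^{n₂,l₂} if and only if l₁ = l₂. -/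
/-- `SC_{k₁}^{n₁,l₁}` DT-embeds into `SC_{k₂}^{n₂,l₂}` iff `l₁ = l₂`. -/
theorem stmt15 (l₁ l₂ : ℕ) (hl₁ : 4 ≤ l₁) (hl₂ : 4 ≤ l₂)
    {Y₁ Y₂ : Type*} (A₁ : Y₁ → Y₁ → Prop) (A₂ : Y₂ → Y₂ → Prop)
    (s₁ : ZMod l₁ → Y₁) (hs₁ : Function.Bijective s₁)
    (hadj₁ : ∀ i j : ZMod l₁, A₁ (s₁ i) (s₁ j) ↔ i ≠ j ∧ (j = i + 1 ∨ i = j + 1))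
    (s₂ : ZMod l₂ → Y₂) (hs₂ : Function.Bijective s₂)
    (hadj₂ : ∀ i j : ZMod l₂, A₂ (s₂ i) (s₂ j) ↔ i ≠ j ∧ (j = i + 1 ∨ i = j + 1)) :
    (∃ h : Y₁ → Y₂, Function.Injective h ∧
      ∀ x y : Y₁, x ≠ y → (A₁ x y ↔ A₂ (h x) (h y))) ↔ l₁ = l₂ := by
  haveI : NeZero l₁ := ⟨by omega⟩
  haveI : NeZero l₂ := ⟨by omega⟩
  constructor
  · rintro ⟨h, hinj, hpres⟩
    set e₂ := Equiv.ofBijective s₂ hs₂ with he₂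
    set f : ZMod l₁ → ZMod l₂ := fun i => e₂.symm (h (s₁ i)) with hf
    have hfinj : Function.Injective f := by
      intro i j hij
      exact hs₁.injective (hinj (e₂.symm.injective hij))
    have hse : ∀ i, s₂ (f i) = h (s₁ i) := fun i => e₂.apply_symm_apply _
    have key : ∀ i j : ZMod l₁, i ≠ j →
        ((j = i + 1 ∨ i = j + 1) ↔ (f j = f i + 1 ∨ f i = f j + 1)) := by
      intro i j hij
      have h1 := hadj₁ i j
      have h2 := hadj₂ (f i) (f j)
      have h3 := hpres (s₁ i) (s₁ j) (fun hc => hij (hs₁.injective hc))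
      rw [hse i, hse j] at h2
      constructor
      · intro hc
        exact (h2.mp (h3.mp (h1.mpr ⟨hij, hc⟩))).2
      · intro hc
        have hne : f i ≠ f j := fun hc' => hij (hfinj hc')
        exact (h1.mp (h3.mpr (h2.mpr ⟨hne, hc⟩))).2
    have one1 : (1 : ZMod l₁) ≠ 0 := by
      have : ((1 : ℕ) : ZMod l₁) ≠ 0 := fun hc => by
        have := Nat.le_of_dvd (by omega) ((ZMod.natCast_eq_zero_iff 1 l₁).mp hc)
        omega
      simpa using this
    have two1 : (2 : ZMod l₁) ≠ 0 := by
      have : ((2 : ℕ) : ZMod l₁) ≠ 0 := fun hc => by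
        have := Nat.le_of_dvd (by omega) ((ZMod.natCast_eq_zero_iff 2 l₁).mp hc)
        omega
      simpa using this
    have step : ∀ i : ZMod l₁, f (i + 1) = f i + 1 ∨ f (i + 1) = f i - 1 := by
      intro i
      have hne : i ≠ i + 1 := by
        intro hc
        exact one1 (by linear_combination -hc)
      rcases (key i (i + 1) hne).mp (Or.inl rfl) with hc | hc
      · exact Or.inl hc
      · right; rw [hc]; ring
    have const : ∀ i : ZMod l₁, f (i + 1 + 1) - f (i + 1) = f (i + 1) - f i := by
      intro i
      have h20 : i + 1 + 1 ≠ i := by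
        intro hc
        exact two1 (by linear_combination hc)
      rcases step i with h1 | h1 <;> rcases step (i + 1) with h2 | h2
      · linear_combination h2 - h1
      · exact absurd (hfinj (by linear_combination h1 + h2 : f (i + 1 + 1) = f i)) h20
      · exact absurd (hfinj (by linear_combination h1 + h2 : f (i + 1 + 1) = f i)) h20
      · linear_combination h2 - h1
    set d := f 1 - f 0 with hd
    have main : ∀ n : ℕ, f ((n : ZMod l₁)) = f 0 + d * n ∧
        f ((n : ZMod l₁) + 1) - f ((n : ZMod l₁)) = d := by
      intro n
      induction n with
      | zero => simp [hd]
      | succ n ih =>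
        have hc : ((n + 1 : ℕ) : ZMod l₁) = (n : ZMod l₁) + 1 := by push_cast; ring
        constructor
        · rw [hc]
          have h2 : f ((n : ZMod l₁) + 1) = f (n : ZMod l₁) + d := by
            linear_combination ih.2
          rw [h2, ih.1]; push_cast; ring
        · rw [hc, const (n : ZMod l₁)]
          exact ih.2
    have hl := (main l₁).1
    rw [ZMod.natCast_self] at hl
    have hd0 : d * (l₁ : ZMod l₂) = 0 := by linear_combination -hl
    have hdu : d = 1 ∨ d = -1 := by
      rcases step 0 with h1 | h1 <;> rw [zero_add] at h1
      · exact Or.inl (by rw [hd, h1]; ring)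
      · exact Or.inr (by rw [hd, h1]; ring)
    have hcast : ((l₁ : ℕ) : ZMod l₂) = 0 := by
      rcases hdu with h1 | h1 <;> rw [h1] at hd0
      · linear_combination hd0
      · linear_combination -hd0
    have hdvd : l₂ ∣ l₁ := (ZMod.natCast_eq_zero_iff l₁ l₂).mp hcast
    have hle1 : l₂ ≤ l₁ := Nat.le_of_dvd (by omega) hdvd
    have hle2 : l₁ ≤ l₂ := by
      have := Fintype.card_le_of_injective f hfinj
      simpa [ZMod.card] using this
    omega
  · rintro rfl
    set e₁ := Equiv.ofBijective s₁ hs₁ with he₁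
    refine ⟨fun x => s₂ (e₁.symm x), ?_, ?_⟩
    · intro x y hxy
      exact e₁.symm.injective (hs₂.injective hxy)
    · intro x y hxy
      have hx : s₁ (e₁.symm x) = x := e₁.apply_symm_apply x
      have hy : s₁ (e₁.symm y) = y := e₁.apply_symm_apply y
      have h1 := hadj₁ (e₁.symm x) (e₁.symm y)
      rw [hx, hy] at h1
      have hne : e₁.symm x ≠ e₁.symm y := fun hc => hxy (by rw [← hx, ← hy, hc])
      rw [h1, hadj₂]
end

section
/- The map p : C → D of the previous setting is not a pseudo-4-covering map (in either the original or the revised definition), since the restriction of p to N₄(c₀,1) fails to be a WL-4-isomorphism. -/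
/-- 4-adjacency on ℤ². -/
def adj4 (a b : ℤ × ℤ) : Prop := |a.1 - b.1| + |a.2 - b.2| = 1

def Cset : Set (ℤ × ℤ) := {(0,0), (1,0), (1,1), (0,1)}

def Dset : Set (ℤ × ℤ) := {(0,0), (1,0), (1,1)}

/-- Induced 4-adjacency on a subset of ℤ². -/
def adjOn (S : Set (ℤ × ℤ)) : S → S → Prop := fun a b => adj4 a.1 b.1

def c0 : Cset := ⟨(0,0), by simp [Cset]⟩
def c1 : Cset := ⟨(1,0), by simp [Cset]⟩
def c2 : Cset := ⟨(1,1), by simp [Cset]⟩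
def c3 : Cset := ⟨(0,1), by simp [Cset]⟩
def d0 : Dset := ⟨(0,0), by simp [Dset]⟩
def d1 : Dset := ⟨(1,0), by simp [Dset]⟩
def d2 : Dset := ⟨(1,1), by simp [Dset]⟩

/-- The map `p : C → D` with `p(cᵢ) = dᵢ` for `i ≤ 2` and `p(c₃) = d₂`. -/
def pCD : Cset → Dset := fun c =>
  if h : (c : ℤ × ℤ) = (0,1) then d2
  else ⟨c.1, by
    have hv := c.2
    simp only [Cset, Set.mem_insert_iff, Set.mem_singleton_iff] at hv
    rcases hv with h1 | h1 | h1 | h1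
    · simp [Dset, h1]
    · simp [Dset, h1]
    · simp [Dset, h1]
    · exact absurd h1 h⟩

lemma pCD_c1 : pCD c1 = d1 := by
  simp [pCD, c1, d1]

lemma pCD_c3 : pCD c3 = d2 := by
  simp [pCD, c3]

lemma pCD_eq_d0 {e : Cset} (h : pCD e = d0) : e = c0 := by
  unfold pCD at h
  split at h
  · exact absurd h (by intro h'; exact absurd (congrArg Subtype.val h') (by decide))
  · apply Subtype.ext
    have := congrArg Subtype.val h
    simpa [d0, c0] using this

lemma c1_mem : c1 ∈ dnbhd (adjOn Cset) c0 := by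
  left; show adj4 (0,0) (1,0); unfold adj4; decide

lemma c3_mem : c3 ∈ dnbhd (adjOn Cset) c0 := by
  left; show adj4 (0,0) (0,1); unfold adj4; decide

lemma notWL : ¬ WLIsoOn (adjOn Cset) (adjOn Dset) pCD (dnbhd (adjOn Cset) c0) := by
  rintro ⟨_, hiff⟩
  have hne : c1 ≠ c3 := by
    intro h; exact absurd (congrArg Subtype.val h) (by decide)
  have h := (hiff c1 c1_mem c3 c3_mem hne).mpr
  rw [pCD_c1, pCD_c3] at h
  have hadj : adjOn Dset d1 d2 := by show adj4 (1,0) (1,1); unfold adj4; decide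
  have : adj4 ((1:ℤ),(0:ℤ)) ((0:ℤ),(1:ℤ)) := h hadj
  revert this; unfold adj4; decide

/-- the map `p : C → D` is not a pseudo-4-covering map in either the
original or the revised sense, the restriction of `p` to `N₄(c₀,1)` failing to be a
WL-4-isomorphism. -/
theorem stmt17 :
    ¬ WLIsoOn (adjOn Cset) (adjOn Dset) pCD (dnbhd (adjOn Cset) c0) ∧
    ¬ PseudoCovering1 (adjOn Cset) (adjOn Dset) pCD ∧
    ¬ PseudoCoveringR (adjOn Cset) (adjOn Dset) pCD := by
  refine ⟨notWL, ?_, ?_⟩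
  · rintro ⟨_, hb⟩
    obtain ⟨M, ⟨e, he⟩, hMp, -, -, hWL⟩ := hb d0
    have heq : e = c0 := pCD_eq_d0 (hMp e he)
    exact notWL (heq ▸ (hWL e he).2)
  · rintro ⟨_, hb⟩
    obtain ⟨M, ⟨e, he⟩, hMp, -, -, hWL⟩ := hb d0
    have heq : e = c0 := pCD_eq_d0 (hMp e he)
    exact notWL (heq ▸ (hWL e he).2)
end

section
/- The revised pseudo-(k₁,k₂)-covering map does not satisfy the unique path lifting property: there exist a pseudo-(2,k)-covering map p : (ℤ⁺,2) → SC_k^{n,l} and a k-path in SC_k^{n,l} starting at s₀ admitting no lift, or two distinct lifts, to a 2-path in ℤ⁺ starting at 0. -/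
/-- Casts of nearby naturals into `ZMod l` agree iff the naturals agree. -/
lemma castEq_aux {l : ℕ} (hl : 4 ≤ l) {a b : ℕ} (h1 : a ≤ b) (h2 : b ≤ a + 3) :
    ((a : ZMod l) = (b : ZMod l)) ↔ a = b := by
  rw [ZMod.natCast_eq_natCast_iff, Nat.modEq_iff_dvd' h1]
  constructor
  · intro hd
    rcases Nat.eq_zero_or_pos (b - a) with h | h
    · omega
    · have := Nat.le_of_dvd h hd; omega
  · intro h; subst h; simp

/-- Casts of naturals below `l` into `ZMod l` agree iff the naturals agree. -/
lemma castEq_aux' {l a b : ℕ} (ha : a < l) (hb : b < l) :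
    ((a : ZMod l) = (b : ZMod l)) ↔ a = b := by
  constructor
  · intro h
    have := congrArg ZMod.val h
    rwa [ZMod.val_cast_of_lt ha, ZMod.val_cast_of_lt hb] at this
  · rintro rfl; rfl

/-- the revised pseudo-covering `p : (ℤ⁺,2) → SC_k^{n,l}` does not satisfy
the unique path lifting property: some k-path starting at `s₀` admits no lift, or two
distinct lifts, starting at `0`. -/
theorem stmt18 (l : ℕ) (hl : 4 ≤ l) {Y : Type*} (Ak : Y → Y → Prop)
    (s : ZMod l → Y) (hs : Function.Bijective s)
    (hadj : ∀ i j : ZMod l, Ak (s i) (s j) ↔ i ≠ j ∧ (j = i + 1 ∨ i = j + 1)) :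
    PseudoCoveringR adjN Ak (fun t : ℕ => s (t : ZMod l)) ∧
    ∃ (m : ℕ) (f : Fin (m + 1) → Y), DigPathF Ak f ∧ f 0 = s 0 ∧
      ((¬ ∃ g : Fin (m + 1) → ℕ, DigPathF adjN g ∧ g 0 = 0 ∧
          (fun t : ℕ => s (t : ZMod l)) ∘ g = f) ∨
        ∃ g₁ g₂ : Fin (m + 1) → ℕ,
          (DigPathF adjN g₁ ∧ g₁ 0 = 0 ∧ (fun t : ℕ => s (t : ZMod l)) ∘ g₁ = f) ∧
          (DigPathF adjN g₂ ∧ g₂ 0 = 0 ∧ (fun t : ℕ => s (t : ZMod l)) ∘ g₂ = f) ∧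
          g₁ ≠ g₂) := by
  haveI : NeZero l := ⟨by omega⟩
  haveI : Fact (1 < l) := ⟨by omega⟩
  set p : ℕ → Y := fun t : ℕ => s (t : ZMod l) with hp
  have hAk : ∀ a b : ℕ, Ak (s ↑a) (s ↑b) ↔
      ((a : ZMod l) ≠ (b : ZMod l) ∧
        ((b : ZMod l) = ((a + 1 : ℕ) : ZMod l) ∨ (a : ZMod l) = ((b + 1 : ℕ) : ZMod l))) := by
    intro a b
    rw [hadj]
    push_cast
    tauto
  constructor
  · -- the pseudo-covering property
    constructor
    · intro y
      obtain ⟨i, rfl⟩ := hs.2 y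
      exact ⟨i.val, by simp [p]⟩
    · intro b
      obtain ⟨i, rfl⟩ := hs.2 b
      set d : ℕ := i.val + l - 1 with hd
      have hd3 : 3 ≤ d := by have := i.val_lt; omega
      have hpe : p (d + 1) = s i := by
        have h1 : ((d + 1 : ℕ) : ZMod l) = i := by
          have : d + 1 = i.val + l := by omega
          rw [this]
          push_cast [ZMod.natCast_self]
          simp
        simp [p, h1]
      have hmem : ∀ x, x ∈ dnbhd adjN (d + 1) ↔ x = d ∨ x = d + 1 ∨ x = d + 2 := by
        intro x
        simp only [dnbhd, adjN, Set.mem_union, Set.mem_setOf_eq, Set.mem_singleton_iff]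
        omega
      have himg : p '' dnbhd adjN (d + 1) ⊆ dnbhd Ak (s i) := by
        rintro y ⟨x, hx, rfl⟩
        rcases (hmem x).mp hx with rfl | rfl | rfl
        · left
          show Ak (s i) (p d)
          rw [← hpe]
          show Ak (s ↑(d + 1)) (s ↑d)
          rw [hAk]
          refine ⟨?_, Or.inr rfl⟩
          intro h
          have := (castEq_aux hl (by omega) (by omega)).mp h.symm
          omega
        · exact Or.inr hpe
        · left
          show Ak (s i) (p (d + 2))
          rw [← hpe]
          show Ak (s ↑(d + 1)) (s ↑(d + 2))
          rw [hAk]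
          refine ⟨?_, Or.inl rfl⟩
          intro h
          have := (castEq_aux hl (by omega) (by omega)).mp h
          omega
      refine ⟨{d + 1}, Set.singleton_nonempty _, ?_, ?_, Set.pairwise_singleton _ _, ?_⟩
      · rintro e rfl
        exact hpe
      · rw [Set.biUnion_singleton]
        exact Set.image_subset_iff.mp himg
      · rintro e rfl
        refine ⟨himg, ?_, ?_⟩
        · -- injectivity
          intro a ha b hb h
          have hab : (a : ZMod l) = (b : ZMod l) := hs.1 h
          have ha' := (hmem a).mp ha
          have hb' := (hmem b).mp hb
          rcases le_total a b with h' | h'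
          · exact (castEq_aux hl h' (by omega)).mp hab
          · exact ((castEq_aux hl h' (by omega)).mp hab.symm).symm
        · -- adjacency preservation
          intro a ha b hb hne
          have ha' := (hmem a).mp ha
          have hb' := (hmem b).mp hb
          show adjN a b ↔ Ak (s ↑a) (s ↑b)
          rw [hAk]
          constructor
          · rintro (rfl | rfl)
            · refine ⟨?_, Or.inl rfl⟩
              intro h
              have := (castEq_aux hl (by omega) (by omega)).mp h
              omega
            · refine ⟨?_, Or.inr rfl⟩
              intro h
              have := (castEq_aux hl (by omega) (by omega)).mp h.symm
              omega
          · rintro ⟨hne', h | h⟩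
            · left
              rcases le_total b (a + 1) with h' | h'
              · exact (castEq_aux hl h' (by omega)).mp h
              · exact ((castEq_aux hl h' (by omega)).mp h.symm).symm
            · right
              rcases le_total a (b + 1) with h' | h'
              · exact (castEq_aux hl h' (by omega)).mp h
              · exact ((castEq_aux hl h' (by omega)).mp h.symm).symm
  · -- the path with no lift
    refine ⟨1, ![s 0, s ((l - 1 : ℕ) : ZMod l)], ?_, ?_, ?_⟩
    · intro i
      fin_cases i
      right
      show Ak (s 0) (s ((l - 1 : ℕ) : ZMod l))
      rw [hadj]
      constructor
      · intro h
        have h0 : ((0 : ℕ) : ZMod l) = ((l - 1 : ℕ) : ZMod l) := by simpa using h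
        have := (castEq_aux' (by omega) (by omega)).mp h0
        omega
      · right
        show (0 : ZMod l) = ((l - 1 : ℕ) : ZMod l) + 1
        have hm1 : ((l - 1 : ℕ) : ZMod l) = -1 := by
          rw [Nat.cast_sub (by omega : 1 ≤ l)]
          simp
        rw [hm1]
        ring
    · simp
    · left
      rintro ⟨g, hg, hg0, hcomp⟩
      have h1 : s ((g 1 : ℕ) : ZMod l) = s ((l - 1 : ℕ) : ZMod l) := by
        have := congrFun hcomp 1
        simpa [p] using this
      have hval : ((g 1 : ℕ) : ZMod l) = ((l - 1 : ℕ) : ZMod l) := hs.1 h1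
      have step := hg 0
      have hcast : (0 : Fin 1).castSucc = (0 : Fin 2) := rfl
      have hsucc : (0 : Fin 1).succ = (1 : Fin 2) := rfl
      rw [hcast, hsucc, hg0] at step
      have hg1 : g 1 = 0 ∨ g 1 = 1 := by
        rcases step with h | h
        · exact Or.inl h.symm
        · rcases h with h | h
          · exact Or.inr h
          · omega
      rcases hg1 with h | h
      · rw [h] at hval
        have := (castEq_aux' (show 0 < l by omega) (by omega)).mp hval
        omega
      · rw [h] at hval
        have := (castEq_aux' (show 1 < l by omega) (by omega)).mp hval
        omega
end

section
/- If (E,k₁) is k₁-connected and (B,k₂) is k₂-connected, then a local (k₁,k₂)-isomorphism p : (E,k₁) → (B,k₂) is automatically surjective, and hence is a (k₁,k₂)-covering map. -/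
/-- a local `(k₁,k₂)`-isomorphism between connected digital images is
surjective, hence a `(k₁,k₂)`-covering map. -/
theorem stmt19 {E B' : Type*} [Nonempty E] [Nonempty B']
    (A : E → E → Prop) (Ab : B' → B' → Prop)
    (hA : Symmetric A) (hAb : Symmetric Ab)
    (hE : DigConn A Set.univ) (hB : DigConn Ab Set.univ)
    (p : E → B') (hp : LocalIso A Ab p) :
    Function.Surjective p ∧ CoveringMap A Ab p := by
  classical
  have key : ∀ x, p '' dnbhd A x = dnbhd Ab (p x) := fun x => (hp x).2.1
  have selfmem : ∀ (x : E), x ∈ dnbhd A x := fun x => Or.inr rfl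
  have memsym : ∀ x y : E, y ∈ dnbhd A x → x ∈ dnbhd A y := by
    intro x y hy
    rcases hy with h | h
    · exact Or.inl (hA h)
    · exact h ▸ selfmem x
  have hsurj : Function.Surjective p := by
    intro b
    obtain ⟨x0⟩ := ‹Nonempty E›
    by_cases hb : p x0 = b
    · exact ⟨x0, hb⟩
    obtain ⟨l, c, _, hc0, hcl, hstep⟩ := hB (p x0) trivial b trivial hb
    have main : ∀ i, i ≤ l → ∃ x, p x = c i := by
      intro i
      induction i with
      | zero => exact fun _ => ⟨x0, hc0.symm⟩
      | succ n ih =>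
        intro hi
        obtain ⟨x, hx⟩ := ih (Nat.le_of_succ_le hi)
        have hmem : c (n + 1) ∈ dnbhd Ab (p x) := by
          left
          rw [hx]
          exact hstep n hi
        rw [← key x] at hmem
        obtain ⟨e, _, he⟩ := hmem
        exact ⟨e, he⟩
    obtain ⟨x, hx⟩ := main l le_rfl
    exact ⟨x, hx.trans hcl⟩
  refine ⟨hsurj, hsurj, fun b => ⟨?_, ?_, fun e he => he ▸ hp e⟩⟩
  · ext y
    simp only [Set.mem_preimage, Set.mem_iUnion, Set.mem_setOf_eq]
    constructor
    · intro hy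
      rcases hy with h | h
      · -- Ab b (p y)
        have hyb : b ∈ dnbhd Ab (p y) := Or.inl (hAb h)
        rw [← key y] at hyb
        obtain ⟨e, heN, hpe⟩ := hyb
        exact ⟨e, hpe, memsym y e heN⟩
      · exact ⟨y, h, selfmem y⟩
    · rintro ⟨e, hpe, hye⟩
      have : p y ∈ dnbhd Ab (p e) := (key e) ▸ ⟨y, hye, rfl⟩
      rwa [hpe] at this
  · intro e he e' he' hne
    rw [Set.disjoint_left]
    intro z hze hze'
    have h1 : e ∈ dnbhd A z := memsym e z hze
    have h2 : e' ∈ dnbhd A z := memsym e' z hze'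
    exact hne ((hp z).1 h1 h2 (he.trans he'.symm))
end
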